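/- Let L be the Lie algebra with [e₁,e₂] = e₂, [e₂,e₃] = 0, [e₁,e₃] = e₃. The bracket induced on L* by an arbitrary antisymmetric r-matrix, namely [e¹,e²]* = r¹²e¹, [e¹,e³]* = r¹³e¹, [e²,e³]* = 2r²³e¹ − r¹³e² + r¹²e³, satisfies the Jacobi identity for all r¹², r¹³, r²³. -/
import Mathlib


noncomputable section

/-- `e i` is the `i`-th standard basis vector (also used for the dual basis `eⁱ`). -/
def e (i : Fin 3) : Fin 3 → ℂ := fun j => if j = i then 1 else 0

/-- Bilinear bracket determined by structure constants `c`: `[e i, e j] = ∑ k, c i j k • e k`. -/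
def bra (c : Fin 3 → Fin 3 → Fin 3 → ℂ) (x y : Fin 3 → ℂ) : Fin 3 → ℂ :=
  fun k => ∑ i, ∑ j, x i * y j * c i j k

/-- Coordinates of the cobracket `δ(x) = [x⊗1 + 1⊗x, r]` where the r-matrix has
coordinates `ρ`, i.e. `r = ∑ ρ i j • e i ⊗ e j`. -/
def cob (c : Fin 3 → Fin 3 → Fin 3 → ℂ) (ρ : Fin 3 → Fin 3 → ℂ) (x : Fin 3 → ℂ) :
    Fin 3 → Fin 3 → ℂ :=
  fun a b => ∑ i, ∑ j, ρ i j * (bra c x (e i) a * e j b + e i a * bra c x (e j) b)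

/-- The induced bracket on the dual space: `⟨[ξ,η]*, e k⟩ = ⟨ξ ⊗ η, δ(e k)⟩`. -/
def dbra (c : Fin 3 → Fin 3 → Fin 3 → ℂ) (ρ : Fin 3 → Fin 3 → ℂ) (ξ η : Fin 3 → ℂ) :
    Fin 3 → ℂ :=
  fun k => ∑ a, ∑ b, ξ a * η b * cob c ρ (e k) a b

/-- Coordinates of the Schouten bracket
`[r,r]ₛ = [r₁₂,r₁₃] + [r₁₂,r₂₃] + [r₁₃,r₂₃]` in `L⊗L⊗L`. -/
def sch (c : Fin 3 → Fin 3 → Fin 3 → ℂ) (ρ : Fin 3 → Fin 3 → ℂ) :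
    Fin 3 → Fin 3 → Fin 3 → ℂ :=
  fun p q s => ∑ i, ∑ j, ∑ k, ∑ l, ρ i j * ρ k l *
    (c i k p * e j q * e l s + e i p * c j k q * e l s + e i p * e k q * c j l s)

/-- Structure constants of the bracket `[e¹,e²]* = r¹² e¹`, `[e¹,e³]* = r¹³ e¹`,
`[e²,e³]* = 2 r²³ e¹ − r¹³ e² + r¹² e³`. -/
def cstar (r12 r13 r23 : ℂ) : Fin 3 → Fin 3 → Fin 3 → ℂ := fun i j k =>
  (if i = 0 ∧ j = 1 then (if k = 0 then r12 else 0)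
    else if i = 0 ∧ j = 2 then (if k = 0 then r13 else 0)
    else if i = 1 ∧ j = 2 then
      (if k = 0 then 2 * r23 else if k = 1 then -r13 else if k = 2 then r12 else 0)
    else 0)
  - (if j = 0 ∧ i = 1 then (if k = 0 then r12 else 0)
    else if j = 0 ∧ i = 2 then (if k = 0 then r13 else 0)
    else if j = 1 ∧ i = 2 then
      (if k = 0 then 2 * r23 else if k = 1 then -r13 else if k = 2 then r12 else 0)
    else 0)

set_option maxHeartbeats 4000000 in
/-- The bracket induced on `L*` by an arbitrary antisymmetric r-matrix, namely
`[e¹,e²]* = r¹² e¹`, `[e¹,e³]* = r¹³ e¹`, `[e²,e³]* = 2 r²³ e¹ − r¹³ e² + r¹² e³`,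
satisfies the Jacobi identity for all `r¹², r¹³, r²³`. -/
theorem dual_jacobi (r12 r13 r23 : ℂ) :
    ∀ i j k : Fin 3,
      bra (cstar r12 r13 r23) (e i) (bra (cstar r12 r13 r23) (e j) (e k))
      + bra (cstar r12 r13 r23) (e j) (bra (cstar r12 r13 r23) (e k) (e i))
      + bra (cstar r12 r13 r23) (e k) (bra (cstar r12 r13 r23) (e i) (e j)) = 0 := by
  have hb : ∀ c (i : Fin 3) (y : Fin 3 → ℂ) (m : Fin 3),
      bra c (e i) y m = ∑ j, y j * c i j m := by
    intro c i y m
    fin_cases i <;>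
      simp +decide only [bra, e, Fin.sum_univ_three, if_true, if_false, one_mul, zero_mul,
        mul_zero, mul_one, add_zero, zero_add] <;> rfl
  intro i j k
  funext m
  simp only [Pi.add_apply, Pi.zero_apply, hb, Fin.sum_univ_three]
  fin_cases i <;> fin_cases j <;> fin_cases k <;> fin_cases m <;>
    · simp +decide only [cstar, e, if_true, if_false]
      ring
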